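/- For every positive integer m, the Baumslag-Solitar group BS(m,m) is residually finite. -/

import Mathlib

/-- Relator set for the Baumslag–Solitar group BS(m,n) = ⟨a, t | t a^m t⁻¹ = a^n⟩,
with generator `0 : Fin 2` playing the role of `a` and `1 : Fin 2` that of `t`. -/
def BSrel (m n : ℤ) : Set (FreeGroup (Fin 2)) :=
  {FreeGroup.of 1 * FreeGroup.of 0 ^ m * (FreeGroup.of 1)⁻¹ * (FreeGroup.of 0 ^ n)⁻¹}

/-- The Baumslag–Solitar group BS(m,n). -/
def BS (m n : ℤ) : Type := PresentedGroup (BSrel m n)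

instance (m n : ℤ) : Group (BS m n) :=
  inferInstanceAs (Group (PresentedGroup (BSrel m n)))
/-- A group is residually finite if every nontrivial element is detected by a
homomorphism to some finite group. -/
def ResiduallyFinite (G : Type*) [Group G] : Prop :=
  ∀ g : G, g ≠ 1 → ∃ (H : Type) (_ : Group H) (_ : Finite H) (f : G →* H), f g ≠ 1

set_option linter.unusedSectionVars false


namespace RFAux

open Monoid Monoid.CoprodI

variable {ι : Type} [DecidableEq ι] {M : ι → Type} [∀ i, Group (M i)] [∀ i, DecidableEq (M i)]

theorem length_rcons {i : ι} (p : Word.Pair M i) :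
    (Word.rcons p).toList.length =
      (if p.head = 1 then 0 else 1) + p.tail.toList.length := by
  rw [Word.rcons]
  split
  · simp
  · simp [Word.cons, Nat.add_comm]

theorem length_eq (i : ι) (w : Word M) :
    w.toList.length = (if (Word.equivPair i w).head = 1 then 0 else 1) +
      (Word.equivPair i w).tail.toList.length := by
  conv_lhs => rw [← (Word.equivPair i).symm_apply_apply w]
  rw [Word.equivPair_symm, length_rcons]

/-- Reduced words of length at most `L`. -/
def TWord (M : ι → Type) [∀ i, Group (M i)] (L : ℕ) : Type :=
  {w : Word M // w.toList.length ≤ L}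

variable (L : ℕ)

/-- Truncated action of `M i` on `TWord M L`. -/
def tact {i : ι} (g : M i) (w : TWord M L) : TWord M L :=
  if h : (Word.equivPair i w.1).head = 1 ∧ w.1.toList.length = L then w
  else ⟨Word.rcons ⟨g * (Word.equivPair i w.1).head, (Word.equivPair i w.1).tail,
      (Word.equivPair i w.1).fstIdx_ne⟩, by
    have hl := length_eq i w.1
    have hw := w.2
    rw [length_rcons]
    simp only at hl ⊢
    rcases not_and_or.mp h with h1 | h2
    · rw [if_neg h1] at hl
      split <;> omega
    · split_ifs at hl with hh
      · rw [hh] at h ⊢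
        split <;> omega
      · split <;> omega⟩

theorem tact_def_pos {i : ι} (g : M i) (w : TWord M L)
    (h : (Word.equivPair i w.1).head = 1 ∧ w.1.toList.length = L) :
    tact L g w = w := by
  rw [tact]; exact dif_pos h

theorem tact_def_neg {i : ι} (g : M i) (w : TWord M L)
    (h : ¬((Word.equivPair i w.1).head = 1 ∧ w.1.toList.length = L)) :
    (tact L g w).1 = Word.rcons ⟨g * (Word.equivPair i w.1).head,
      (Word.equivPair i w.1).tail, (Word.equivPair i w.1).fstIdx_ne⟩ := by
  rw [tact]; exact congrArg Subtype.val (dif_neg h)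

theorem tact_one {i : ι} (w : TWord M L) : tact L (1 : M i) w = w := by
  by_cases h : (Word.equivPair i w.1).head = 1 ∧ w.1.toList.length = L
  · exact tact_def_pos L 1 w h
  · apply Subtype.ext
    rw [tact_def_neg L 1 w h]
    simp only [one_mul]
    conv_rhs => rw [← (Word.equivPair i).symm_apply_apply w.1, Word.equivPair_symm]

theorem tact_mul {i : ι} (g g' : M i) (w : TWord M L) :
    tact L (g * g') w = tact L g (tact L g' w) := by
  by_cases hf : (Word.equivPair i w.1).head = 1 ∧ w.1.toList.length = L
  · rw [tact_def_pos L g' w hf, tact_def_pos L (g * g') w hf, tact_def_pos L g w hf]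
  · have h1 := tact_def_neg L g' w hf
    have hpair : Word.equivPair i (tact L g' w).1 =
        ⟨g' * (Word.equivPair i w.1).head, (Word.equivPair i w.1).tail,
          (Word.equivPair i w.1).fstIdx_ne⟩ := by
      rw [h1, ← Word.equivPair_symm, Equiv.apply_symm_apply]
    have hlen : (Word.equivPair i w.1).tail.toList.length < L := by
      have hl := length_eq i w.1
      have hw := w.2
      rcases not_and_or.mp hf with hx | hx
      · rw [if_neg hx] at hl; omega
      · split_ifs at hl with hh <;> omega
    have hnf : ¬((Word.equivPair i (tact L g' w).1).head = 1 ∧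
        (tact L g' w).1.toList.length = L) := by
      rw [hpair, h1]
      rintro ⟨hone, hlen'⟩
      rw [length_rcons] at hlen'
      rw [if_pos hone] at hlen'
      simp only [Word.Pair.mk.injEq] at hlen'
      change 0 + (Word.equivPair i w.1).tail.toList.length = L at hlen'
      omega
    apply Subtype.ext
    rw [tact_def_neg L (g * g') w hf, tact_def_neg L g (tact L g' w) hnf]
    simp only [hpair, mul_assoc]

/-- The truncated action as a homomorphism to permutations. -/
def tpermHom (i : ι) : M i →* Equiv.Perm (TWord M L) where
  toFun g :=
    { toFun := tact L g
      invFun := tact L g⁻¹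
      left_inv := fun w => by rw [← tact_mul, inv_mul_cancel, tact_one]
      right_inv := fun w => by rw [← tact_mul, mul_inv_cancel, tact_one] }
  map_one' := by ext w; exact tact_one L w
  map_mul' g g' := by ext w; exact tact_mul L g g' w

/-- The induced homomorphism from the free product. -/
def tlift : CoprodI M →* Equiv.Perm (TWord M L) :=
  CoprodI.lift (tpermHom L)

theorem tlift_prod (w : Word M) (hw : w.toList.length ≤ L) :
    tlift L w.prod ⟨Word.empty, by simp⟩ = ⟨w, hw⟩ := by
  induction w using Word.consRecOn with
  | empty => simp [Word.prod_empty]; rfl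
  | cons i g v h1 h2 ih =>
    have hlc : (Word.cons g v h1 h2).toList.length = v.toList.length + 1 := by
      simp [Word.cons]
    have hv : v.toList.length ≤ L := by omega
    rw [Word.prod_cons, map_mul]
    refine (congrArg (tlift L (of g)) (ih hv)).trans ?_
    rw [tlift, CoprodI.lift_of]
    show tact L g ⟨v, hv⟩ = _
    have hpv : Word.equivPair i v = ⟨1, v, h1⟩ := Word.equivPair_eq_of_fstIdx_ne h1
    apply Subtype.ext
    refine Eq.trans (tact_def_neg L g _ ?_) ?_
    swap
    · simp only [hpv, mul_one, Word.rcons, dif_neg h2]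
    · rw [hpv]
      simp only [not_and]
      intro
      omega

instance [Finite ι] [∀ i, Finite (M i)] : Finite (TWord M L) := by
  haveI := Fintype.ofFinite ((i : ι) × M i)
  let f : TWord M L → (Fin L → Option (Σ i, M i)) := fun w k => w.1.toList[(k : ℕ)]?
  have hf : Function.Injective f := by
    intro w₁ w₂ h
    apply Subtype.ext
    apply Word.ext
    apply List.ext_getElem?
    intro n
    by_cases hn : n < L
    · exact congrFun h ⟨n, hn⟩
    · rw [List.getElem?_eq_none (le_trans w₁.2 (by omega)),
        List.getElem?_eq_none (le_trans w₂.2 (by omega))]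
  exact Finite.of_injective f hf


/-- `w.prod = 1` iff `w` is the empty word. -/
theorem prod_eq_one_iff (w : Word M) : w.prod = 1 ↔ w = Word.empty := by
  constructor
  · intro h
    have h1 : Word.equiv w.prod = w := Word.equiv.apply_symm_apply w
    rw [h] at h1
    have h2 : Word.equiv (1 : CoprodI M) = Word.empty := one_smul (CoprodI M) Word.empty
    rw [← h1, h2]
  · rintro rfl; exact Word.prod_empty

theorem equiv_prod (q : CoprodI M) : (Word.equiv q).prod = q :=
  Word.equiv.symm_apply_apply q

/-- Key detection theorem: any nontrivial element of a free product of finite groups is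
detected in a finite group. -/
theorem coprodI_detect [Finite ι] [∀ i, Finite (M i)] (q : CoprodI M) (hq : q ≠ 1) :
    ∃ (H : Type) (_ : Group H) (_ : Finite H) (f : CoprodI M →* H), f q ≠ 1 := by
  set w := Word.equiv q with hw
  have hqw : w.prod = q := equiv_prod q
  have hwne : w ≠ Word.empty := by
    intro h
    rw [h] at hqw
    exact hq (hqw ▸ Word.prod_empty)
  refine ⟨Equiv.Perm (TWord M w.toList.length), inferInstance, inferInstance,
    tlift w.toList.length, ?_⟩
  intro hcon
  rw [← hqw] at hcon
  have := tlift_prod w.toList.length w le_rfl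
  rw [hcon] at this
  exact hwne (congrArg Subtype.val this).symm

/-- Mapping a word letterwise by homomorphisms that do not kill any of its letters
yields a nontrivial element. -/
theorem lift_map_prod_ne_one {M' : ι → Type} [∀ i, Group (M' i)] [∀ i, DecidableEq (M' i)]
    (φ : ∀ i, M i →* M' i) (w : Word M) (hne : w ≠ Word.empty)
    (hl : ∀ l ∈ w.toList, φ l.1 l.2 ≠ 1) :
    CoprodI.lift (fun i => (CoprodI.of (M := M')).comp (φ i)) w.prod ≠ 1 := by
  let w' : Word M' :=
    { toList := w.toList.map (fun l => ⟨l.1, φ l.1 l.2⟩)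
      ne_one := by
        intro l hlmem
        rw [List.mem_map] at hlmem
        obtain ⟨a, ha, rfl⟩ := hlmem
        exact hl a ha
      chain_ne := by
        rw [List.isChain_map]
        exact w.chain_ne }
  have hprod : CoprodI.lift (fun i => (CoprodI.of (M := M')).comp (φ i)) w.prod = w'.prod := by
    rw [Word.prod, Word.prod, map_list_prod, List.map_map, List.map_map]
    congr 1
    try
      apply List.map_congr_left
      intro a _
      simp [CoprodI.lift_of, Function.comp]
  rw [hprod]
  intro hcon
  rw [prod_eq_one_iff] at hcon
  apply hne
  have : w.toList.map (fun l => (⟨l.1, φ l.1 l.2⟩ : Σ i, M' i)) = [] :=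
    congrArg Word.toList hcon
  rw [List.map_eq_nil_iff] at this
  exact Word.ext this

end RFAux

namespace RFAux

/-- Two-member family of groups indexed by `Bool`. -/
abbrev fam2 (A B : Type) : Bool → Type := fun b => Bool.rec A B b

instance fam2Group {A B : Type} [Group A] [Group B] : ∀ b, Group (fam2 A B b)
  | false => ‹Group A›
  | true => ‹Group B›

instance fam2DecEq {A B : Type} [DecidableEq A] [DecidableEq B] :
    ∀ b, DecidableEq (fam2 A B b)
  | false => ‹DecidableEq A›
  | true => ‹DecidableEq B›

instance fam2Finite {A B : Type} [Finite A] [Finite B] : ∀ b, Finite (fam2 A B b)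
  | false => ‹Finite A›
  | true => ‹Finite B›

/-- A pair of homomorphisms as a family. -/
def fam2Hom {A B A' B' : Type} [Group A] [Group B] [Group A'] [Group B']
    (fA : A →* A') (fB : B →* B') : ∀ b, fam2 A B b →* fam2 A' B' b
  | false => fA
  | true => fB

end RFAux

section BSproof

open Monoid Monoid.CoprodI RFAux Multiplicative

variable (m : ℕ)

/-- The free product `ZMod m ∗ ℤ` (multiplicatively). -/
abbrev QQ := CoprodI (fam2 (Multiplicative (ZMod m)) (Multiplicative ℤ))

def qgen0 : QQ m :=
  CoprodI.of (M := fam2 (Multiplicative (ZMod m)) (Multiplicative ℤ)) (i := false)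
    (ofAdd (1 : ZMod m))

def qgen1 : QQ m :=
  CoprodI.of (M := fam2 (Multiplicative (ZMod m)) (Multiplicative ℤ)) (i := true)
    (ofAdd (1 : ℤ))

lemma qgen0_pow : (qgen0 m) ^ (m : ℤ) = 1 := by
  have h1 : (ofAdd (1 : ZMod m)) ^ (m : ℤ) = 1 := by
    rw [← ofAdd_zsmul, zsmul_one, Int.cast_natCast, ZMod.natCast_self, ofAdd_zero]
  rw [qgen0, ← map_zpow, h1, map_one]

def rho : FreeGroup (Fin 2) →* QQ m := FreeGroup.lift ![qgen0 m, qgen1 m]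

lemma rho_of0 : rho m (FreeGroup.of 0) = qgen0 m := by
  rw [rho, FreeGroup.lift_apply_of]; rfl

lemma rho_of1 : rho m (FreeGroup.of 1) = qgen1 m := by
  rw [rho, FreeGroup.lift_apply_of]; rfl

lemma rho_rel : ∀ r ∈ BSrel (m : ℤ) (m : ℤ), rho m r = 1 := by
  intro r hr
  rw [BSrel, Set.mem_singleton_iff] at hr
  subst hr
  have h := qgen0_pow m
  simp only [map_mul, map_inv, map_zpow, rho_of0, rho_of1, h, inv_one, mul_one, one_mul]
  exact mul_inv_cancel _

/-- The natural map `BS(m,m) → ZMod m ∗ ℤ`. -/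
def psi : PresentedGroup (BSrel (m : ℤ) (m : ℤ)) →* QQ m :=
  QuotientGroup.lift _ (rho m) (by
    have h : Subgroup.normalClosure (BSrel (m:ℤ) (m:ℤ)) ≤ (rho m).ker := by
      apply Subgroup.normalClosure_le_normal
      intro x hx
      exact (rho_rel m x hx : _)
    intro x hx
    exact h hx)

lemma psi_mk (w : FreeGroup (Fin 2)) :
    psi m (PresentedGroup.mk (BSrel (m:ℤ) (m:ℤ)) w) = rho m w := rfl

/-- The cyclic group of order `m`, presented. -/
abbrev Srel : Set (FreeGroup (Fin 2)) := {FreeGroup.of 0 ^ (m : ℤ)}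

abbrev PP := PresentedGroup (Srel m)

def pgen0 : PP m := PresentedGroup.of 0
def pgen1 : PP m := PresentedGroup.of 1

lemma pgen0_pow : (pgen0 m) ^ (m : ℤ) = 1 := by
  have h0 : (FreeGroup.of 0 ^ (m : ℤ)) ∈ Subgroup.normalClosure (Srel m) :=
    Subgroup.subset_normalClosure (Set.mem_singleton _)
  have h1 : PresentedGroup.mk (Srel m) (FreeGroup.of 0 ^ (m : ℤ)) = 1 :=
    (QuotientGroup.eq_one_iff _).mpr h0
  rw [map_zpow] at h1
  exact h1

def hom1 : Multiplicative (ZMod m) →* PP m :=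
  AddMonoidHom.toMultiplicativeLeft
    (ZMod.lift m ⟨zmultiplesHom (Additive (PP m)) (Additive.ofMul (pgen0 m)), by
      rw [zmultiplesHom_apply, ← ofMul_zpow, pgen0_pow, ofMul_one]⟩)

lemma hom1_apply : hom1 m (ofAdd (1 : ZMod m)) = pgen0 m := by
  rw [hom1, AddMonoidHom.coe_toMultiplicativeLeft]
  simp only [Function.comp_apply, Equiv.coe_fn_mk, MonoidHom.coe_mk, OneHom.coe_mk, toAdd_ofAdd]
  rw [show (1 : ZMod m) = ((1 : ℤ) : ZMod m) by norm_cast]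
  rw [ZMod.lift_coe, zmultiplesHom_apply, one_zsmul]
  rfl

def hom2 : Multiplicative ℤ →* PP m := zpowersHom (PP m) (pgen1 m)

def chi : QQ m →* PP m :=
  CoprodI.lift (fun b => match b with
    | false => hom1 m
    | true => hom2 m)

lemma chi_rho : (chi m).comp (rho m) = PresentedGroup.mk (Srel m) := by
  apply FreeGroup.ext_hom
  intro a
  fin_cases a
  · show chi m (rho m (FreeGroup.of 0)) = PresentedGroup.mk (Srel m) (FreeGroup.of 0)
    rw [rho_of0, qgen0, chi, CoprodI.lift_of]
    exact hom1_apply m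
  · show chi m (rho m (FreeGroup.of 1)) = PresentedGroup.mk (Srel m) (FreeGroup.of 1)
    rw [rho_of1, qgen1, chi, CoprodI.lift_of]
    show zpowersHom (PP m) (pgen1 m) (ofAdd (1:ℤ)) = pgen1 m
    rw [zpowersHom_apply, toAdd_ofAdd, zpow_one]

/-- The generators of BS(m,m). -/
def aBS : PresentedGroup (BSrel (m:ℤ) (m:ℤ)) := PresentedGroup.of 0
def tBS : PresentedGroup (BSrel (m:ℤ) (m:ℤ)) := PresentedGroup.of 1

lemma bs_rel : tBS m * aBS m ^ (m:ℤ) * (tBS m)⁻¹ * (aBS m ^ (m:ℤ))⁻¹ = 1 := by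
  have h0 : (FreeGroup.of 1 * FreeGroup.of 0 ^ (m:ℤ) * (FreeGroup.of 1)⁻¹ *
      (FreeGroup.of 0 ^ (m:ℤ))⁻¹) ∈ Subgroup.normalClosure (BSrel (m:ℤ) (m:ℤ)) :=
    Subgroup.subset_normalClosure (Set.mem_singleton _)
  have h1 := (QuotientGroup.eq_one_iff _).mpr h0
  simp only [QuotientGroup.mk_mul, QuotientGroup.mk_inv, QuotientGroup.mk_zpow] at h1
  exact h1

lemma central : ∀ g : PresentedGroup (BSrel (m:ℤ) (m:ℤ)), Commute (aBS m ^ m) g := by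
  have hat : Commute (aBS m ^ m) (tBS m) := by
    have h1 := bs_rel m
    rw [mul_inv_eq_one] at h1
    have h2 := congrArg (· * tBS m) h1
    simp only [mul_assoc, inv_mul_cancel, mul_one] at h2
    rw [← zpow_natCast (aBS m) m]
    exact h2.symm
  intro g
  obtain ⟨w, rfl⟩ := PresentedGroup.mk_surjective _ g
  induction w using FreeGroup.induction_on with
  | C1 => exact Commute.one_right _
  | of x =>
    fin_cases x
    · exact ((Commute.refl (aBS m)).pow_left m)
    · exact hat
  | inv_of x ih => exact (ih).inv_right
  | mul x y ihx ihy =>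
    rw [map_mul]
    exact ihx.mul_right ihy

lemma zpowers_normal : (Subgroup.zpowers (aBS m ^ m)).Normal := by
  constructor
  intro x hx g
  obtain ⟨k, rfl⟩ := Subgroup.mem_zpowers_iff.mp hx
  have hc : Commute ((aBS m ^ m) ^ k) g := (central m g).zpow_left k
  rw [← hc.eq, mul_assoc, mul_inv_cancel, mul_one]
  exact Subgroup.mem_zpowers_iff.mpr ⟨k, rfl⟩

lemma ker_psi_le (g : PresentedGroup (BSrel (m:ℤ) (m:ℤ))) (hg : psi m g = 1) :
    g ∈ Subgroup.zpowers (aBS m ^ m) := by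
  obtain ⟨w, rfl⟩ := PresentedGroup.mk_surjective _ g
  rw [psi_mk] at hg
  have h1 : PresentedGroup.mk (Srel m) w = 1 := by
    have := DFunLike.congr_fun (chi_rho m) w
    rw [MonoidHom.comp_apply, hg, map_one] at this
    exact this.symm
  have h2 : w ∈ Subgroup.normalClosure (Srel m) := (QuotientGroup.eq_one_iff _).mp h1
  have h3 : PresentedGroup.mk (BSrel (m:ℤ) (m:ℤ)) w ∈
      Subgroup.map (PresentedGroup.mk (BSrel (m:ℤ) (m:ℤ))) (Subgroup.normalClosure (Srel m)) :=
    Subgroup.mem_map_of_mem _ h2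
  rw [Subgroup.map_normalClosure _ _ (PresentedGroup.mk_surjective _)] at h3
  haveI := zpowers_normal m
  refine Subgroup.normalClosure_le_normal ?_ h3
  intro x hx
  simp only [Set.image_singleton, Set.mem_singleton_iff] at hx
  subst hx
  rw [map_zpow]
  rw [show PresentedGroup.mk (BSrel (m:ℤ) (m:ℤ)) (FreeGroup.of 0) = aBS m from rfl]
  rw [zpow_natCast]
  exact Subgroup.mem_zpowers _

/-- The abelianization-style map `BS(m,m) → ℤ`, `a ↦ 1`, `t ↦ 0`. -/
def phiBS : PresentedGroup (BSrel (m:ℤ) (m:ℤ)) →* Multiplicative ℤ :=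
  QuotientGroup.lift _ (FreeGroup.lift ![ofAdd (1:ℤ), 1]) (by
    have h : Subgroup.normalClosure (BSrel (m:ℤ) (m:ℤ)) ≤ (FreeGroup.lift ![ofAdd (1:ℤ), 1]).ker := by
      apply Subgroup.normalClosure_le_normal
      intro x hx
      rw [BSrel, Set.mem_singleton_iff] at hx
      subst hx
      rw [SetLike.mem_coe, MonoidHom.mem_ker]
      rw [map_mul, map_mul, map_inv, map_inv, map_zpow]
      rw [FreeGroup.lift_apply_of, FreeGroup.lift_apply_of]
      simp [mul_comm]
    intro x hx
    exact h hx)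

lemma phiBS_a : phiBS m (aBS m) = ofAdd (1:ℤ) := by
  show FreeGroup.lift ![ofAdd (1:ℤ), 1] (FreeGroup.of 0) = ofAdd (1:ℤ)
  rw [FreeGroup.lift_apply_of]
  rfl

/-- letter size in `ZMod m ∗ ℤ` -/
def lsize : (Σ b, fam2 (Multiplicative (ZMod m)) (Multiplicative ℤ) b) → ℕ
  | ⟨false, _⟩ => 0
  | ⟨true, g⟩ => (Multiplicative.toAdd (g : Multiplicative ℤ)).natAbs

theorem zmod_cast_ne_zero (z : ℤ) (hz : z ≠ 0) (n : ℕ) (hn : z.natAbs < n) :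
    (z : ZMod n) ≠ 0 := by
  intro h
  rw [ZMod.intCast_zmod_eq_zero_iff_dvd] at h
  have h2 : n ∣ z.natAbs := by
    have := Int.natAbs_dvd_natAbs.mpr h
    simpa using this
  have := Nat.le_of_dvd (Int.natAbs_pos.mpr hz) h2
  omega

theorem detect_in_QQ (m : ℕ) [NeZero m] (q : QQ m) (hq1 : q ≠ 1) :
    ∃ (H : Type) (_ : Group H) (_ : Finite H) (f : QQ m →* H), f q ≠ 1 := by
  have hqw : (Word.equiv q).prod = q := equiv_prod q
  have hwne : Word.equiv q ≠ Word.empty := by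
    intro h
    apply hq1
    rw [← hqw, h]
    exact Word.prod_empty
  set w := Word.equiv q with hwdef
  set N : ℕ := (w.toList.map (lsize m)).sum + 1 with hN
  haveI : NeZero N := ⟨Nat.succ_ne_zero _⟩
  have hθ : CoprodI.lift (fun b => (CoprodI.of).comp
      (fam2Hom (MonoidHom.id (Multiplicative (ZMod m)))
        (AddMonoidHom.toMultiplicative (Int.castAddHom (ZMod N))) b)) q ≠ 1 := by
    rw [← hqw]
    apply lift_map_prod_ne_one _ _ hwne
    rintro ⟨b, x⟩ hmem
    have hx1 : x ≠ 1 := w.ne_one _ hmem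
    cases b with
    | false =>
      show (MonoidHom.id (Multiplicative (ZMod m))) x ≠ 1
      simpa using hx1
    | true =>
      have hxz : Multiplicative.toAdd (show Multiplicative ℤ from x) ≠ 0 :=
        fun h => hx1 (toAdd_eq_zero.mp h)
      have hmem2 : lsize m ⟨true, x⟩ ∈ w.toList.map (lsize m) :=
        List.mem_map_of_mem hmem
      have hle := List.single_le_sum (l := w.toList.map (lsize m))
        (fun y _ => Nat.zero_le y) _ hmem2
      have hbound : (Multiplicative.toAdd (show Multiplicative ℤ from x)).natAbs < N := by
        have heq : lsize m ⟨true, x⟩ =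
          (Multiplicative.toAdd (show Multiplicative ℤ from x)).natAbs := rfl
        omega
      show AddMonoidHom.toMultiplicative (Int.castAddHom (ZMod N)) x ≠ 1
      intro hcon
      apply zmod_cast_ne_zero _ hxz N hbound
      have hcast := congrArg Multiplicative.toAdd hcon
      simpa using hcast
  obtain ⟨H, h1, h2, f, hf⟩ := coprodI_detect _ hθ
  exact ⟨H, h1, h2, f.comp (CoprodI.lift (fun b => (CoprodI.of).comp
      (fam2Hom (MonoidHom.id (Multiplicative (ZMod m)))
        (AddMonoidHom.toMultiplicative (Int.castAddHom (ZMod N))) b))), hf⟩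

theorem BS_mm_residually_finite (m : ℕ) (hm : 0 < m) :
    ResiduallyFinite (BS m m) := by
  haveI : NeZero m := ⟨hm.ne'⟩
  show ResiduallyFinite (PresentedGroup (BSrel (m:ℤ) (m:ℤ)))
  intro g hg
  by_cases hψ : psi m g = 1
  · obtain ⟨k, hk⟩ := Subgroup.mem_zpowers_iff.mp (ker_psi_le m g hψ)
    have hk0 : k ≠ 0 := by
      rintro rfl
      rw [zpow_zero] at hk
      exact hg hk.symm
    have hz : (m:ℤ) * k ≠ 0 :=
      mul_ne_zero (Int.natCast_ne_zero.mpr hm.ne') hk0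
    have hφ : phiBS m g = ofAdd ((m:ℤ) * k) := by
      rw [← hk, ← zpow_natCast (aBS m) m, ← zpow_mul, map_zpow, phiBS_a m, ← ofAdd_zsmul,
        smul_eq_mul, mul_one]
    refine ⟨Multiplicative (ZMod (((m:ℤ) * k).natAbs + 1)), inferInstance, inferInstance,
      (AddMonoidHom.toMultiplicative (Int.castAddHom (ZMod (((m:ℤ) * k).natAbs + 1)))).comp
        (phiBS m), ?_⟩
    rw [MonoidHom.comp_apply, hφ]
    intro hcon
    apply zmod_cast_ne_zero ((m:ℤ)*k) hz (((m:ℤ)*k).natAbs + 1) (Nat.lt_succ_self _)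
    have hcast := congrArg Multiplicative.toAdd hcon
    simpa [mul_comm] using hcast
  · obtain ⟨H, h1, h2, f, hf⟩ := detect_in_QQ m (psi m g) hψ
    exact ⟨H, h1, h2, f.comp (psi m), hf⟩

end BSproof
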